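/- arXiv:math/0606323 — 5 statements merged into one kernel-verified Lean document; each statement's English description precedes it below -/
import Mathlib

section
/- Let A be a real number with −1/108 < A < 0. Then the cubic equation A + Δ² − 4Δ³ = 0 has exactly three distinct real roots, and exactly two of them lie in the open interval (0, 1/2). -/
/-!
A real cubic has at most three roots. The values of `A + x² - 4x³` at `-1/2, 0, 1/6, 1/2` are
`A + 3/4 > 0`, `A < 0`, `A + 1/108 > 0` and `A - 1/4 < 0` (`1/6` is the local maximum), so the
intermediate value theorem gives a root in each of `(-1/2, 0)`, `(0, 1/6)` and `(1/6, 1/2)`, and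
these are all the roots.
-/

open Polynomial Set

theorem exists_mem_Ioo_eq_zero_of_mul_neg {f : ℝ → ℝ} (hf : Continuous f) {a b : ℝ} (hab : a ≤ b)
    (hsign : f a * f b < 0) : ∃ x ∈ Ioo a b, f x = 0 := by
  rcases mul_neg_iff.1 hsign with ⟨ha, hb⟩ | ⟨ha, hb⟩
  · exact intermediate_value_Ioo' hab hf.continuousOn ⟨hb, ha⟩
  · exact intermediate_value_Ioo hab hf.continuousOn ⟨ha, hb⟩

theorem setOf_cubic_eq_rootSet (A : ℝ) :
    {x : ℝ | A + x ^ 2 - 4 * x ^ 3 = 0} = (C A + X ^ 2 - 4 * X ^ 3 : ℝ[X]).rootSet ℝ := by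
  have hdeg : (C A + X ^ 2 - 4 * X ^ 3 : ℝ[X]).natDegree = 3 := by compute_degree!
  have hne : (C A + X ^ 2 - 4 * X ^ 3 : ℝ[X]) ≠ 0 := ne_zero_of_natDegree_gt (hdeg ▸ three_pos)
  ext x
  simp [mem_rootSet, hne]

theorem finite_setOf_cubic (A : ℝ) : {x : ℝ | A + x ^ 2 - 4 * x ^ 3 = 0}.Finite := by
  rw [setOf_cubic_eq_rootSet]
  exact rootSet_finite _ ℝ

theorem ncard_setOf_cubic_le_three (A : ℝ) : {x : ℝ | A + x ^ 2 - 4 * x ^ 3 = 0}.ncard ≤ 3 := by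
  rw [setOf_cubic_eq_rootSet]
  exact (ncard_rootSet_le _ ℝ).trans (by compute_degree)

theorem exists_three_roots_cubic {A : ℝ} (h₁ : -(1/108) < A) (h₂ : A < 0) :
    ∃ r₁ r₂ r₃ : ℝ, r₁ < 0 ∧ 0 < r₂ ∧ r₂ < r₃ ∧ r₃ < 1/2 ∧
      A + r₁ ^ 2 - 4 * r₁ ^ 3 = 0 ∧ A + r₂ ^ 2 - 4 * r₂ ^ 3 = 0 ∧ A + r₃ ^ 2 - 4 * r₃ ^ 3 = 0 := by
  have hf : Continuous fun x : ℝ => A + x ^ 2 - 4 * x ^ 3 := by fun_prop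
  obtain ⟨r₁, ⟨-, hr₁⟩, hfr₁⟩ :=
    exists_mem_Ioo_eq_zero_of_mul_neg hf (by norm_num : -(1/2 : ℝ) ≤ 0) (by norm_num; nlinarith)
  obtain ⟨r₂, ⟨hr₂, hr₂'⟩, hfr₂⟩ :=
    exists_mem_Ioo_eq_zero_of_mul_neg hf (by norm_num : (0 : ℝ) ≤ 1/6) (by norm_num; nlinarith)
  obtain ⟨r₃, ⟨hr₃', hr₃⟩, hfr₃⟩ :=
    exists_mem_Ioo_eq_zero_of_mul_neg hf (by norm_num : (1/6 : ℝ) ≤ 1/2) (by norm_num; nlinarith)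
  exact ⟨r₁, r₂, r₃, hr₁, hr₂, hr₂'.trans hr₃', hr₃, hfr₁, hfr₂, hfr₃⟩

/-- For `−1/108 < A < 0`, the cubic `A + Δ² − 4Δ³ = 0` has exactly three distinct
real roots, exactly two of which lie in the open interval `(0, 1/2)`. -/
theorem stmt_2 (A : ℝ) (h₁ : -(1/108) < A) (h₂ : A < 0) :
    {x : ℝ | A + x ^ 2 - 4 * x ^ 3 = 0}.ncard = 3 ∧
    ({x : ℝ | A + x ^ 2 - 4 * x ^ 3 = 0} ∩ Set.Ioo 0 (1/2)).ncard = 2 := by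
  obtain ⟨r₁, r₂, r₃, h₁₀, h₀₂, h₂₃, h₃, hr₁, hr₂, hr₃⟩ := exists_three_roots_cubic h₁ h₂
  have hcard : ({r₁, r₂, r₃} : Set ℝ).ncard = 3 :=
    ncard_eq_three.2 ⟨r₁, r₂, r₃, by linarith, by linarith, h₂₃.ne, rfl⟩
  have hroots : {x : ℝ | A + x ^ 2 - 4 * x ^ 3 = 0} = {r₁, r₂, r₃} :=
    (eq_of_subset_of_ncard_le (by rintro x (rfl | rfl | rfl) <;> assumption)
      (hcard.symm ▸ ncard_setOf_cubic_le_three A) (finite_setOf_cubic A)).symm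
  have hpos : ({r₁, r₂, r₃} : Set ℝ) ∩ Ioo 0 (1/2) = {r₂, r₃} := by
    ext x
    simp only [mem_inter_iff, mem_insert_iff, mem_singleton_iff, mem_Ioo]
    constructor
    · rintro ⟨rfl | rfl | rfl, hx, -⟩
      exacts [absurd hx h₁₀.not_gt, .inl rfl, .inr rfl]
    · rintro (rfl | rfl)
      exacts [⟨.inr (.inl rfl), h₀₂, by linarith⟩, ⟨.inr (.inr rfl), by linarith, h₃⟩]
  rw [hroots, hpos, ncard_pair h₂₃.ne]
  exact ⟨hcard, rfl⟩
end

section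
/- For an integer m and a nonnegative integer k, the function (r,θ) ↦ r^k e^{imθ} (viewed as a function of (x,y) = (r cos θ, r sin θ) on ℝ²∖{0}) extends to a polynomial function that is homogeneous of degree k if and only if k − |m| is even and nonnegative. -/
/-!
Put `z = e^{iθ}`. Substituting `x = (z² + 1)/2`, `y = (z² - 1)/(2i)` into a homogeneous `P` of
degree `k` gives a polynomial `Q` with `Q(z) = z^k P(cos θ, sin θ)`. If `P(cos θ, sin θ) = e^{imθ}`
then `Q(z) = z^(k+m)` on the unit circle, which forces `k + m ≥ 0`; conjugating the coefficients
of `P` replaces `m` by `-m`, whence `|m| ≤ k`. Comparing `P(-1, 0) = (-1)^k P(1, 0)` with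
`e^{imπ} = (-1)^m` gives the parity. Conversely, `(x² + y²)^j (x ± iy)^|m|` is a solution.
-/

open Complex Polynomial

theorem MvPolynomial.IsHomogeneous.eval_smul {R σ : Type*} [CommSemiring R]
    {φ : MvPolynomial σ R} {n : ℕ} (hφ : φ.IsHomogeneous n) (c : R) (x : σ → R) :
    MvPolynomial.eval (c • x) φ = c ^ n * MvPolynomial.eval x φ := by
  rw [MvPolynomial.eval_eq, MvPolynomial.eval_eq, Finset.mul_sum]
  refine Finset.sum_congr rfl fun d hd => ?_
  have hdeg : ∑ i ∈ d.support, d i = n := by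
    rw [← hφ (MvPolynomial.mem_support_iff.mp hd), Finsupp.weight_apply, Finsupp.sum]
    simp
  simp only [Pi.smul_apply, smul_eq_mul, mul_pow, Finset.prod_mul_distrib,
    Finset.prod_pow_eq_pow_sum, hdeg]
  ring

theorem MvPolynomial.IsHomogeneous.eval_polar {P : MvPolynomial (Fin 2) ℂ} {k : ℕ}
    (hP : P.IsHomogeneous k) (r θ : ℝ) :
    MvPolynomial.eval ![((r * Real.cos θ : ℝ) : ℂ), ((r * Real.sin θ : ℝ) : ℂ)] P
      = (r : ℂ) ^ k * MvPolynomial.eval ![(Real.cos θ : ℂ), (Real.sin θ : ℂ)] P := by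
  rw [← hP.eval_smul]
  congr 2
  funext i
  fin_cases i <;> simp

theorem Polynomial.eq_zero_of_forall_eval_exp_mul_I_eq_zero {p : ℂ[X]}
    (h : ∀ θ : ℝ, p.eval (cexp (θ * I)) = 0) : p = 0 := by
  have hcircle : (Set.range fun θ : ℝ => cexp (θ * I)).Infinite :=
    (isPreconnected_range (by fun_prop)).infinite_of_nontrivial
      ⟨1, ⟨0, by simp⟩, -1, ⟨Real.pi, exp_pi_mul_I⟩, by norm_num⟩
  exact eq_zero_of_infinite_isRoot p <| hcircle.mono <| by rintro _ ⟨θ, rfl⟩; exact h θ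

-- At `z = e^{iθ}` these are `z cos θ` and `z sin θ`, as `cos θ = (z + z⁻¹)/2` and
-- `sin θ = (z - z⁻¹)/(2i)`.
noncomputable def scaledCircleCoords : Fin 2 → ℂ[X] :=
  ![C 2⁻¹ * (X ^ 2 + 1), C (2 * I)⁻¹ * (X ^ 2 - 1)]

theorem eval_exp_mul_I_scaledCircleCoords (θ : ℝ) :
    (fun i => (scaledCircleCoords i).eval (cexp (θ * I)))
      = cexp (θ * I) • ![(Real.cos θ : ℂ), (Real.sin θ : ℂ)] := by
  ext i
  fin_cases i
  · simp [scaledCircleCoords, ofReal_cos, cos, exp_neg]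
    field_simp
  · simp [scaledCircleCoords, ofReal_sin, sin, exp_neg]
    field_simp
    ring

def EqExpOnCircle (P : MvPolynomial (Fin 2) ℂ) (m : ℤ) : Prop :=
  ∀ θ : ℝ, MvPolynomial.eval ![(Real.cos θ : ℂ), (Real.sin θ : ℂ)] P = cexp (m * θ * I)

namespace EqExpOnCircle

variable {P : MvPolynomial (Fin 2) ℂ} {k : ℕ} {m : ℤ}

theorem map_conj (h : EqExpOnCircle P m) :
    EqExpOnCircle (MvPolynomial.map (starRingEnd ℂ) P) (-m) := by
  intro θ
  have hreal : starRingEnd ℂ ∘ ![(Real.cos θ : ℂ), (Real.sin θ : ℂ)]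
      = ![(Real.cos θ : ℂ), (Real.sin θ : ℂ)] := by
    ext i; fin_cases i <;> exact conj_ofReal _
  rw [MvPolynomial.eval_map, ← hreal, ← MvPolynomial.eval₂_comp, h θ, ← exp_conj]
  simp

theorem eval_aeval_scaledCircleCoords (hP : P.IsHomogeneous k) (h : EqExpOnCircle P m)
    (θ : ℝ) :
    (MvPolynomial.aeval scaledCircleCoords P).eval (cexp (θ * I))
      = cexp (θ * I) ^ ((k : ℤ) + m) := by
  rw [← coe_aeval_eq_eval, ← AlgHom.comp_apply, MvPolynomial.comp_aeval]
  simp only [coe_aeval_eq_eval, MvPolynomial.aeval_eq_eval]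
  rw [eval_exp_mul_I_scaledCircleCoords, hP.eval_smul, h θ, zpow_add₀ (exp_ne_zero _),
    zpow_natCast, ← exp_int_mul]
  ring_nf

theorem natCast_add_nonneg (hP : P.IsHomogeneous k) (h : EqExpOnCircle P m) :
    0 ≤ (k : ℤ) + m := by
  by_contra! hneg
  obtain ⟨N, hN⟩ : ∃ N : ℕ, (N : ℤ) = -((k : ℤ) + m) := ⟨_, Int.toNat_of_nonneg (by omega)⟩
  have hzero : X ^ N * MvPolynomial.aeval scaledCircleCoords P - 1 = 0 := by
    refine eq_zero_of_forall_eval_exp_mul_I_eq_zero fun θ => ?_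
    rw [eval_sub, eval_mul, eval_pow, eval_X, eval_one, eval_aeval_scaledCircleCoords hP h,
      ← zpow_natCast, ← zpow_add₀ (exp_ne_zero _), hN, neg_add_cancel, zpow_zero, sub_self]
  have hN0 : N ≠ 0 := by omega
  simpa [hN0] using congrArg (eval 0) hzero

theorem even_natCast_sub (hP : P.IsHomogeneous k) (h : EqExpOnCircle P m) :
    Even ((k : ℤ) - m) := by
  have hone : MvPolynomial.eval ![(1 : ℂ), 0] P = 1 := by simpa using h 0
  have hpow : (-1 : ℂ) ^ (k : ℤ) = (-1) ^ m :=
    calc (-1 : ℂ) ^ (k : ℤ) = (-1) ^ k * MvPolynomial.eval ![(1 : ℂ), 0] P := by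
          rw [hone, mul_one, zpow_natCast]
      _ = MvPolynomial.eval ((-1 : ℂ) • ![(1 : ℂ), 0]) P := (hP.eval_smul _ _).symm
      _ = MvPolynomial.eval ![(Real.cos Real.pi : ℂ), (Real.sin Real.pi : ℂ)] P := by
          congr 2; funext i; fin_cases i <;> simp
      _ = (-1) ^ m := by rw [h, mul_assoc, exp_int_mul, exp_pi_mul_I]
  rw [← Int.negOnePow_eq_iff]
  apply Units.ext
  rw [← Int.cast_inj (α := ℂ), Int.cast_negOnePow, Int.cast_negOnePow, hpow]

end EqExpOnCircle

noncomputable def polarMonomial (j n : ℕ) : MvPolynomial (Fin 2) ℂ :=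
  (MvPolynomial.X 0 ^ 2 + MvPolynomial.X 1 ^ 2) ^ j *
    (MvPolynomial.X 0 + MvPolynomial.C I * MvPolynomial.X 1) ^ n

theorem isHomogeneous_polarMonomial (j n : ℕ) :
    (polarMonomial j n).IsHomogeneous (2 * j + n) := by
  have hsq : (MvPolynomial.X 0 ^ 2 + MvPolynomial.X 1 ^ 2 :
      MvPolynomial (Fin 2) ℂ).IsHomogeneous 2 :=
    ((MvPolynomial.isHomogeneous_X ℂ 0).pow 2).add ((MvPolynomial.isHomogeneous_X ℂ 1).pow 2)
  have hlin : (MvPolynomial.X 0 + MvPolynomial.C I * MvPolynomial.X 1 :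
      MvPolynomial (Fin 2) ℂ).IsHomogeneous 1 :=
    (MvPolynomial.isHomogeneous_X ℂ 0).add ((MvPolynomial.isHomogeneous_X ℂ 1).C_mul I)
  simpa only [polarMonomial, mul_comm 2 j, one_mul] using (hsq.pow j).mul (hlin.pow n)

theorem eqExpOnCircle_polarMonomial (j n : ℕ) : EqExpOnCircle (polarMonomial j n) n := by
  intro θ
  simp only [polarMonomial, map_mul, map_pow, map_add, MvPolynomial.eval_X,
    MvPolynomial.eval_C, Matrix.cons_val_zero, Matrix.cons_val_one]
  rw [← ofReal_pow, ← ofReal_pow, ← ofReal_add, Real.cos_sq_add_sin_sq, ofReal_one, one_pow,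
    one_mul, ofReal_cos, ofReal_sin, mul_comm I, cos_add_sin_I, ← exp_nat_mul, Int.cast_natCast]
  ring_nf

theorem exists_isHomogeneous_eqExpOnCircle_iff (k : ℕ) (m : ℤ) :
    (∃ P : MvPolynomial (Fin 2) ℂ, P.IsHomogeneous k ∧ EqExpOnCircle P m)
      ↔ |m| ≤ k ∧ Even ((k : ℤ) - |m|) := by
  constructor
  · rintro ⟨P, hP, h⟩
    have hadd := h.natCast_add_nonneg hP
    have hsub := h.map_conj.natCast_add_nonneg (hP.map _)
    refine ⟨abs_le.mpr ⟨by linarith, by linarith⟩, ?_⟩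
    rw [Int.even_sub, even_abs, ← Int.even_sub]
    exact h.even_natCast_sub hP
  · rintro ⟨hle, t, ht⟩
    obtain ⟨n, hn⟩ : ∃ n : ℕ, m = n ∨ m = -n := ⟨_, Int.natAbs_eq m⟩
    have habs : |m| = n := by rcases hn with rfl | rfl <;> simp
    obtain ⟨j, rfl⟩ : ∃ j, k = 2 * j + n := ⟨t.toNat, by omega⟩
    rcases hn with rfl | rfl
    · exact ⟨_, isHomogeneous_polarMonomial j n, eqExpOnCircle_polarMonomial j n⟩
    · exact ⟨_, (isHomogeneous_polarMonomial j n).map _,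
        (eqExpOnCircle_polarMonomial j n).map_conj⟩

/-- For `m : ℤ` and `k : ℕ`, the function `(r,θ) ↦ r^k e^{imθ}` of
`(x,y) = (r cos θ, r sin θ)` on `ℝ² ∖ {0}` extends to a homogeneous polynomial
function of degree `k` if and only if `k − |m|` is even and nonnegative. -/
theorem stmt_5 (m : ℤ) (k : ℕ) :
    (∃ P : MvPolynomial (Fin 2) ℂ, P.IsHomogeneous k ∧
      ∀ r θ : ℝ, 0 < r →
        MvPolynomial.eval
            (![((r * Real.cos θ : ℝ) : ℂ), ((r * Real.sin θ : ℝ) : ℂ)]) P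
          = (r : ℂ) ^ k * Complex.exp ((m : ℂ) * θ * Complex.I))
    ↔ (|m| ≤ (k : ℤ) ∧ Even ((k : ℤ) - |m|)) := by
  rw [← exists_isHomogeneous_eqExpOnCircle_iff]
  refine exists_congr fun P => and_congr_right fun hP => ?_
  simp only [hP.eval_polar]
  constructor
  · intro h θ
    simpa using h 1 θ one_pos
  · intro h r θ _
    rw [h θ]
end

section
/- On a 5-manifold with a one-parameter family of coframes (η⁰(t), η¹(t), η²(t), η³(t)) on a 4-manifold M, if the structure equations dη⁰ = −2η²∧η³, dη³∧η¹ᵇ = 3η⁰∧η¹∧η², dη¹∧η² = −3η⁰∧η³∧η¹ hold at t = t₀ and the evolution equations ∂ₜη⁰ = 2η¹, ∂ₜ(η²∧η³) = −dη¹, ∂ₜ(η³∧η¹) = 3η⁰∧η³ − dη², ∂ₜ(η¹∧η²) = −3η⁰∧η² − dη³ hold for all t, then the structure equations hold for all t. -/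
open Set

/-! Each structure equation holds at `t₀`, so it suffices that its two sides have the same
`t`-derivative. For `dη⁰ = −2η²³` both derivatives are `2dη¹` by the evolution equations. For the
other two, `d ∘ d = 0` and the Leibniz rule reduce the difference of the derivatives to
`±3 ηʲ ∧ (dη⁰ + 2η²³)` (`j = 3` resp. `j = 2`), which vanishes once the first equation is known
for all `t`. -/

theorem eqOn_of_hasDerivAt_eq {E : Type*} [NormedAddCommGroup E] [NormedSpace ℝ E]
    {f g f' g' : ℝ → E} {s : Set ℝ} {t₀ : ℝ} (hs : IsOpen s) (hs' : IsPreconnected s)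
    (hf : ∀ t ∈ s, HasDerivAt f (f' t) t) (hg : ∀ t ∈ s, HasDerivAt g (g' t) t)
    (hfg' : EqOn f' g' s) (ht₀ : t₀ ∈ s) (hfg : f t₀ = g t₀) : EqOn f g s :=
  hs.eqOn_of_deriv_eq hs' (fun t ht => (hf t ht).differentiableAt.differentiableWithinAt)
    (fun t ht => (hg t ht).differentiableAt.differentiableWithinAt)
    (fun t ht => by rw [(hf t ht).deriv, (hg t ht).deriv, hfg' ht]) ht₀ hfg

section Wedge

variable {Ω1 Ω2 Ω3 : Type*}
    [AddCommGroup Ω1] [Module ℝ Ω1] [TopologicalSpace Ω1]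
    [AddCommGroup Ω2] [Module ℝ Ω2] [TopologicalSpace Ω2]
    [IsTopologicalAddGroup Ω2] [ContinuousConstSMul ℝ Ω2]
    [AddCommGroup Ω3] [Module ℝ Ω3] [TopologicalSpace Ω3]
    [IsTopologicalAddGroup Ω3] [ContinuousConstSMul ℝ Ω3]
    (w11 : Ω1 →L[ℝ] Ω1 →L[ℝ] Ω2) (w12 : Ω1 →L[ℝ] Ω2 →L[ℝ] Ω3)
    (d1 : Ω1 →L[ℝ] Ω2) (d2 : Ω2 →L[ℝ] Ω3)

theorem wedge_wedge_self_right (hanti : ∀ a b : Ω1, w11 a b = - w11 b a)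
    (halt : ∀ a b : Ω1, w12 a (w11 a b) = 0) (a b : Ω1) : w12 b (w11 a b) = 0 := by
  rw [hanti, map_neg, halt, neg_zero]

theorem d_evolution31_eq (hanti : ∀ a b : Ω1, w11 a b = - w11 b a)
    (halt : ∀ a b : Ω1, w12 a (w11 a b) = 0)
    (hleib : ∀ a b : Ω1, d2 (w11 a b) = w12 b (d1 a) - w12 a (d1 b))
    (hdd : ∀ a : Ω1, d2 (d1 a) = 0) {a0 a1 a2 a3 : Ω1} (hd0 : d1 a0 = (-2 : ℝ) • w11 a2 a3) :
    d2 ((3 : ℝ) • w11 a0 a3 - d1 a2)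
      = (3 : ℝ) • (w12 a0 (-(3 : ℝ) • w11 a0 a2 - d1 a3) + w12 ((2 : ℝ) • a1) (w11 a1 a2)) := by
  have h323 := wedge_wedge_self_right w11 w12 hanti halt a2 a3
  simp only [map_sub, map_smul, hleib, hdd, hd0, halt, h323, smul_apply]
  module

theorem d_evolution12_eq (hanti : ∀ a b : Ω1, w11 a b = - w11 b a)
    (halt : ∀ a b : Ω1, w12 a (w11 a b) = 0)
    (hleib : ∀ a b : Ω1, d2 (w11 a b) = w12 b (d1 a) - w12 a (d1 b))
    (hdd : ∀ a : Ω1, d2 (d1 a) = 0) {a0 a1 a2 a3 : Ω1} (hd0 : d1 a0 = (-2 : ℝ) • w11 a2 a3) :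
    d2 (-(3 : ℝ) • w11 a0 a2 - d1 a3)
      = (-3 : ℝ) • (w12 a0 ((3 : ℝ) • w11 a0 a3 - d1 a2) + w12 ((2 : ℝ) • a1) (w11 a3 a1)) := by
  have h131 := wedge_wedge_self_right w11 w12 hanti halt a3 a1
  simp only [map_sub, map_smul, hleib, hdd, hd0, halt, h131, smul_apply]
  module

end Wedge

/-- Proposition 3.2 ("if" direction, preservation of the structure equations).
Here `Ω1`, `Ω2`, `Ω3` play the rôle of the spaces of 1-, 2- and 3-forms on the
4-manifold `M`, `w11 : Ω1 × Ω1 → Ω2` and `w12 : Ω1 × Ω2 → Ω3` are the wedge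
products, and `d1`, `d2` the exterior derivatives, satisfying the usual
identities: antisymmetry of the wedge of 1-forms, `η ∧ η ∧ ω`-type vanishing,
the Leibniz rule `d(a ∧ b) = b ∧ da − a ∧ db` (for 1-forms `a, b`, using that
2-forms commute with 1-forms) and `d ∘ d = 0`.  If the one-parameter family of
coframes `(η⁰(t), η¹(t), η²(t), η³(t))` satisfies the structure equations
`dη⁰ = −2η²∧η³`, `d(η³∧η¹) = 3η⁰∧η¹∧η²`, `d(η¹∧η²) = −3η⁰∧η³∧η¹` at `t = t₀`
and the evolution equations `∂ₜη⁰ = 2η¹`, `∂ₜ(η²∧η³) = −dη¹`,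
`∂ₜ(η³∧η¹) = 3η⁰∧η³ − dη²`, `∂ₜ(η¹∧η²) = −3η⁰∧η² − dη³` for all `t`, then the
structure equations hold for all `t`. -/
theorem stmt_7 {Ω1 Ω2 Ω3 : Type*}
    [NormedAddCommGroup Ω1] [NormedSpace ℝ Ω1]
    [NormedAddCommGroup Ω2] [NormedSpace ℝ Ω2]
    [NormedAddCommGroup Ω3] [NormedSpace ℝ Ω3]
    (w11 : Ω1 →L[ℝ] Ω1 →L[ℝ] Ω2) (w12 : Ω1 →L[ℝ] Ω2 →L[ℝ] Ω3)
    (d1 : Ω1 →L[ℝ] Ω2) (d2 : Ω2 →L[ℝ] Ω3)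
    (hanti : ∀ a b : Ω1, w11 a b = - w11 b a)
    (halt : ∀ a b : Ω1, w12 a (w11 a b) = 0)
    (hleib : ∀ a b : Ω1, d2 (w11 a b) = w12 b (d1 a) - w12 a (d1 b))
    (hdd : ∀ a : Ω1, d2 (d1 a) = 0)
    (tlo thi t₀ : ℝ) (ht₀ : t₀ ∈ Ioo tlo thi)
    (η0 η1 η2 η3 : ℝ → Ω1)
    (hev0 : ∀ t ∈ Ioo tlo thi, HasDerivAt η0 ((2 : ℝ) • η1 t) t)
    (hev23 : ∀ t ∈ Ioo tlo thi,
      HasDerivAt (fun s => w11 (η2 s) (η3 s)) (-(d1 (η1 t))) t)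
    (hev31 : ∀ t ∈ Ioo tlo thi,
      HasDerivAt (fun s => w11 (η3 s) (η1 s))
        ((3 : ℝ) • w11 (η0 t) (η3 t) - d1 (η2 t)) t)
    (hev12 : ∀ t ∈ Ioo tlo thi,
      HasDerivAt (fun s => w11 (η1 s) (η2 s))
        (-(3 : ℝ) • w11 (η0 t) (η2 t) - d1 (η3 t)) t)
    (hstr0 : d1 (η0 t₀) = (-2 : ℝ) • w11 (η2 t₀) (η3 t₀))
    (hstr31 : d2 (w11 (η3 t₀) (η1 t₀))
      = (3 : ℝ) • w12 (η0 t₀) (w11 (η1 t₀) (η2 t₀)))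
    (hstr12 : d2 (w11 (η1 t₀) (η2 t₀))
      = (-3 : ℝ) • w12 (η0 t₀) (w11 (η3 t₀) (η1 t₀))) :
    ∀ t ∈ Ioo tlo thi,
      d1 (η0 t) = (-2 : ℝ) • w11 (η2 t) (η3 t) ∧
      d2 (w11 (η3 t) (η1 t)) = (3 : ℝ) • w12 (η0 t) (w11 (η1 t) (η2 t)) ∧
      d2 (w11 (η1 t) (η2 t)) = (-3 : ℝ) • w12 (η0 t) (w11 (η3 t) (η1 t)) := by
  have h0 : EqOn (fun t => d1 (η0 t)) (fun t => (-2 : ℝ) • w11 (η2 t) (η3 t)) (Ioo tlo thi) :=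
    eqOn_of_hasDerivAt_eq isOpen_Ioo isPreconnected_Ioo
      (fun t ht => d1.hasFDerivAt.comp_hasDerivAt t (hev0 t ht))
      (fun t ht => (hev23 t ht).const_smul (-2 : ℝ)) (fun t _ => by simp) ht₀ hstr0
  have h31 : EqOn (fun t => d2 (w11 (η3 t) (η1 t)))
      (fun t => (3 : ℝ) • w12 (η0 t) (w11 (η1 t) (η2 t))) (Ioo tlo thi) :=
    eqOn_of_hasDerivAt_eq isOpen_Ioo isPreconnected_Ioo
      (fun t ht => d2.hasFDerivAt.comp_hasDerivAt t (hev31 t ht))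
      (fun t ht => (w12.hasDerivAt_of_bilinear (fun _ => hev0 t ht)
        (fun _ => hev12 t ht)).const_smul (3 : ℝ))
      (fun t ht => d_evolution31_eq w11 w12 d1 d2 hanti halt hleib hdd (h0 ht)) ht₀ hstr31
  have h12 : EqOn (fun t => d2 (w11 (η1 t) (η2 t)))
      (fun t => (-3 : ℝ) • w12 (η0 t) (w11 (η3 t) (η1 t))) (Ioo tlo thi) :=
    eqOn_of_hasDerivAt_eq isOpen_Ioo isPreconnected_Ioo
      (fun t ht => d2.hasFDerivAt.comp_hasDerivAt t (hev12 t ht))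
      (fun t ht => (w12.hasDerivAt_of_bilinear (fun _ => hev0 t ht)
        (fun _ => hev31 t ht)).const_smul (-3 : ℝ))
      (fun t ht => d_evolution12_eq w11 w12 d1 d2 hanti halt hleib hdd (h0 ht)) ht₀ hstr12
  exact fun t ht => ⟨h0 ht, h31 ht, h12 ht⟩
end

section
/- Let h, a: (t₋, t₊) → ℝ be smooth with h > 0 and a h > 0, satisfying d/dt(h²) = a and d/dt(a h) = h − 6h³. Then h is strictly increasing; and writing x = dh/dt as a function of h, x satisfies 4x² + 2h x (dx/dh) = 1 − 6h², whose general solution is x(h) = (1/(2h²))√(A + h⁴ − 4h⁶) for a constant A. -/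
open Set

/-- If `h, a : (t₋,t₊) → ℝ` are smooth with `h > 0`, `ah > 0`, `(h²)′ = a` and
`(ah)′ = h − 6h³`, then `h` is strictly increasing, and the quantity
`(2h²h′)² − h⁴ + 4h⁶` is a constant `A`; i.e. `x = dh/dt`, as a function of `h`,
satisfies `4x² + 2hx·dx/dh = 1 − 6h²`, with general solution
`x(h) = (1/(2h²))√(A + h⁴ − 4h⁶)`. -/
theorem stmt_9 (tlo thi : ℝ) (h a : ℝ → ℝ)
    (hpos : ∀ t ∈ Ioo tlo thi, 0 < h t)
    (hah : ∀ t ∈ Ioo tlo thi, 0 < a t * h t)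
    (hdiff : ∀ t ∈ Ioo tlo thi, DifferentiableAt ℝ h t)
    (heq1 : ∀ t ∈ Ioo tlo thi, HasDerivAt (fun s => h s ^ 2) (a t) t)
    (heq2 : ∀ t ∈ Ioo tlo thi,
      HasDerivAt (fun s => a s * h s) (h t - 6 * h t ^ 3) t) :
    StrictMonoOn h (Ioo tlo thi) ∧
    ∃ A : ℝ, ∀ t ∈ Ioo tlo thi,
      (2 * h t ^ 2 * deriv h t) ^ 2 = A + h t ^ 4 - 4 * h t ^ 6 := by
  have hh : ∀ t ∈ Ioo tlo thi, HasDerivAt h (deriv h t) t := fun t ht =>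
    (hdiff t ht).hasDerivAt
  have haeq : ∀ t ∈ Ioo tlo thi, a t = 2 * h t * deriv h t := by
    intro t ht
    have h2 : HasDerivAt (fun s => h s ^ 2) (2 * h t ^ 1 * deriv h t) t :=
      (hh t ht).pow 2
    have := (heq1 t ht).unique h2
    simpa [pow_one] using this
  have hderivpos : ∀ t ∈ Ioo tlo thi, 0 < deriv h t := by
    intro t ht
    have h1 := hpos t ht
    have h2 := hah t ht
    rw [haeq t ht] at h2
    nlinarith [sq_nonneg (h t)]
  have hmono : StrictMonoOn h (Ioo tlo thi) := by
    apply strictMonoOn_of_deriv_pos (convex_Ioo tlo thi)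
    · exact fun t ht => (hdiff t ht).continuousAt.continuousWithinAt
    · intro t ht
      rw [interior_Ioo] at ht
      exact hderivpos t ht
  refine ⟨hmono, ?_⟩
  set G : ℝ → ℝ := fun t => (a t * h t) ^ 2 - h t ^ 4 + 4 * h t ^ 6 with hG
  have hGderiv : ∀ t ∈ Ioo tlo thi, HasDerivAt G 0 t := by
    intro t ht
    have d1 : HasDerivAt (fun s => (a s * h s) ^ 2)
        (2 * (a t * h t) ^ 1 * (h t - 6 * h t ^ 3)) t := (heq2 t ht).pow 2
    have d2 : HasDerivAt (fun s => h s ^ 4) (4 * h t ^ 3 * deriv h t) t :=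
      (hh t ht).pow 4
    have d3 : HasDerivAt (fun s => 4 * h s ^ 6) (4 * (6 * h t ^ 5 * deriv h t)) t :=
      ((hh t ht).pow 6).const_mul 4
    have d := (d1.sub d2).add d3
    have key : 2 * (a t * h t) ^ 1 * (h t - 6 * h t ^ 3) - 4 * h t ^ 3 * deriv h t
        + 4 * (6 * h t ^ 5 * deriv h t) = 0 := by
      rw [haeq t ht]; ring
    rw [key] at d
    exact d
  by_cases hne : (Ioo tlo thi).Nonempty
  · obtain ⟨t₀, ht₀⟩ := hne
    refine ⟨G t₀, fun t ht => ?_⟩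
    have hconst : G t = G t₀ := by
      have := Convex.norm_image_sub_le_of_norm_hasDerivWithin_le
        (f := G) (f' := fun _ => (0 : ℝ)) (C := 0)
        (fun x hx => (hGderiv x hx).hasDerivWithinAt)
        (fun x hx => by simp) (convex_Ioo tlo thi) ht₀ ht
      simp only [zero_mul] at this
      have h0 : ‖G t - G t₀‖ ≤ 0 := le_trans this (by positivity)
      have := norm_le_zero_iff.mp h0
      linarith [sub_eq_zero.mp this]
    have h2h : 2 * h t ^ 2 * deriv h t = a t * h t := by
      rw [haeq t ht]; ring
    rw [h2h, ← hconst]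
    simp only [hG]
    ring
  · exact ⟨0, fun t ht => absurd ⟨t, ht⟩ hne⟩
end

section
/- Let g = su(2) ⊕ ℝ with dual basis as above (de¹ = −e²³ etc., de⁴ = 0), let m ∈ ℤ, and suppose left-invariant 1-forms η⁰ = μ₁e¹ + μ₄e⁴ (μ₁ ≠ 0), η¹ = a₁e¹ + a₄e⁴ (a₄ ≠ 0), η² = h e², η³ = k e³ (h,k > 0) satisfy dη⁰ = −2η²∧η³, d(η³∧η¹) = 3η⁰∧η¹∧η² + m e⁴∧η¹∧η², d(η¹∧η²) = −3η⁰∧η³∧η¹ − m e⁴∧η³∧η¹. Then k = h, μ₁ = 2h², and 3a₁μ₄ = 6h²a₄ − a₄ − a₁m. -/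
/-! Invariant forms on the Lie algebra `g = su(2) ⊕ ℝ`, in coordinates:
`1`-forms in the basis `e¹,…,e⁴` (indices `0,…,3`), `2`-forms in the basis
`e¹²,e¹³,e¹⁴,e²³,e²⁴,e³⁴`, `3`-forms in the basis `e¹²³,e¹²⁴,e¹³⁴,e²³⁴`.
The Chevalley–Eilenberg differential is determined by `de¹ = −e²³`,
`de² = −e³¹`, `de³ = −e¹²`, `de⁴ = 0` and the Leibniz rule. -/

abbrev One4 : Type := Fin 4 → ℝ

/-- wedge product `Λ¹ × Λ¹ → Λ²`. -/
def wedge11 (a b : One4) : Fin 6 → ℝ :=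
  ![a 0 * b 1 - a 1 * b 0, a 0 * b 2 - a 2 * b 0, a 0 * b 3 - a 3 * b 0,
    a 1 * b 2 - a 2 * b 1, a 1 * b 3 - a 3 * b 1, a 2 * b 3 - a 3 * b 2]

/-- wedge product `Λ¹ × Λ² → Λ³`. -/
def wedge12 (a : One4) (ω : Fin 6 → ℝ) : Fin 4 → ℝ :=
  ![a 0 * ω 3 - a 1 * ω 1 + a 2 * ω 0,
    a 0 * ω 4 - a 1 * ω 2 + a 3 * ω 0,
    a 0 * ω 5 - a 2 * ω 2 + a 3 * ω 1,
    a 1 * ω 5 - a 2 * ω 4 + a 3 * ω 3]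

/-- Chevalley–Eilenberg differential on `1`-forms. -/
def dOne (a : One4) : Fin 6 → ℝ :=
  ![-a 2, a 1, 0, -a 0, 0, 0]

/-- Chevalley–Eilenberg differential on `2`-forms. -/
def dTwo (ω : Fin 6 → ℝ) : Fin 4 → ℝ :=
  ![0, -ω 5, ω 4, -ω 2]

/-! Comparing the `e²³` component of `dη⁰ = −2η²∧η³` gives `μ₁ = 2hk`. With
`X = 3a₁μ₄ − 3μ₁a₄ + a₁m`, the `e¹²⁴` component of the second equation and the `e¹³⁴`
component of the third give `hX = −ka₄` and `kX = −ha₄`. Adding them, `h + k > 0` forces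
`X = −a₄`, and then `a₄ ≠ 0` forces `k = h`. -/

section Components

local notation "𝐞" i:max => (Pi.single i 1 : One4)

variable {m μ₁ μ₄ a₁ a₄ h k : ℝ}

lemma coeff_e23_of_dOne_eq
    (H : dOne (μ₁ • 𝐞 0 + μ₄ • 𝐞 3) = (-2 : ℝ) • wedge11 (h • 𝐞 1) (k • 𝐞 2)) :
    μ₁ = 2 * (h * k) := by
  simpa [dOne, wedge11] using congrFun H 3

lemma coeff_e124_of_dTwo_wedge11_eq
    (H : dTwo (wedge11 (k • 𝐞 2) (a₁ • 𝐞 0 + a₄ • 𝐞 3))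
      = (3 : ℝ) • wedge12 (μ₁ • 𝐞 0 + μ₄ • 𝐞 3) (wedge11 (a₁ • 𝐞 0 + a₄ • 𝐞 3) (h • 𝐞 1))
        + m • wedge12 (𝐞 3) (wedge11 (a₁ • 𝐞 0 + a₄ • 𝐞 3) (h • 𝐞 1))) :
    h * (3 * a₁ * μ₄ - 3 * μ₁ * a₄ + a₁ * m) = -(k * a₄) := by
  have H1 : -(k * a₄) = 3 * (-(μ₁ * (a₄ * h)) + μ₄ * (a₁ * h)) + m * (a₁ * h) := by
    simpa [dTwo, wedge11, wedge12] using congrFun H 1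
  linear_combination -H1

lemma coeff_e134_of_dTwo_wedge11_eq
    (H : dTwo (wedge11 (a₁ • 𝐞 0 + a₄ • 𝐞 3) (h • 𝐞 1))
      = (-3 : ℝ) • wedge12 (μ₁ • 𝐞 0 + μ₄ • 𝐞 3) (wedge11 (k • 𝐞 2) (a₁ • 𝐞 0 + a₄ • 𝐞 3))
        - m • wedge12 (𝐞 3) (wedge11 (k • 𝐞 2) (a₁ • 𝐞 0 + a₄ • 𝐞 3))) :
    k * (3 * a₁ * μ₄ - 3 * μ₁ * a₄ + a₁ * m) = -(h * a₄) := by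
  have H2 : -(a₄ * h) = -(3 * (μ₁ * (k * a₄) + -(μ₄ * (k * a₁)))) + m * (k * a₁) := by
    simpa [dTwo, wedge11, wedge12] using congrFun H 2
  linear_combination -H2

end Components

lemma eq_and_eq_neg_of_mul_eq_neg_mul {K : Type*} [Field K] {h k x a : K}
    (hhk : h + k ≠ 0) (ha : a ≠ 0) (h₁ : h * x = -(k * a)) (h₂ : k * x = -(h * a)) :
    k = h ∧ x = -a := by
  have hx : x = -a := mul_left_cancel₀ hhk (by linear_combination h₁ + h₂)
  refine ⟨mul_right_cancel₀ ha ?_, hx⟩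
  linear_combination h₁ - h * hx

theorem stmt_13_general (m : ℤ) (μ₁ μ₄ a₁ a₄ h k : ℝ)
    (ha₄ : a₄ ≠ 0) (hh : 0 < h) (hk : 0 < k)
    (η0 η1 η2 η3 : One4)
    (hη0 : η0 = μ₁ • (Pi.single 0 1 : One4) + μ₄ • (Pi.single 3 1 : One4))
    (hη1 : η1 = a₁ • (Pi.single 0 1 : One4) + a₄ • (Pi.single 3 1 : One4))
    (hη2 : η2 = h • (Pi.single 1 1 : One4))
    (hη3 : η3 = k • (Pi.single 2 1 : One4))
    (heq0 : dOne η0 = (-2 : ℝ) • wedge11 η2 η3)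
    (heq31 : dTwo (wedge11 η3 η1)
      = (3 : ℝ) • wedge12 η0 (wedge11 η1 η2)
        + (m : ℝ) • wedge12 (Pi.single 3 1 : One4) (wedge11 η1 η2))
    (heq12 : dTwo (wedge11 η1 η2)
      = (-3 : ℝ) • wedge12 η0 (wedge11 η3 η1)
        - (m : ℝ) • wedge12 (Pi.single 3 1 : One4) (wedge11 η3 η1)) :
    k = h ∧ μ₁ = 2 * h ^ 2 ∧ 3 * a₁ * μ₄ = 6 * h ^ 2 * a₄ - a₄ - a₁ * m := by
  subst hη0 hη1 hη2 hη3
  obtain ⟨hkh, hx⟩ := eq_and_eq_neg_of_mul_eq_neg_mul (by positivity) ha₄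
    (coeff_e124_of_dTwo_wedge11_eq heq31) (coeff_e134_of_dTwo_wedge11_eq heq12)
  have hμ₁ : μ₁ = 2 * h ^ 2 := by rw [coeff_e23_of_dOne_eq heq0, hkh]; ring
  exact ⟨hkh, hμ₁, by linear_combination hx + 3 * a₄ * hμ₁⟩

/-- Proposition 4.1, second case: if the invariant `1`-forms
`η⁰ = μ₁e¹ + μ₄e⁴` (`μ₁ ≠ 0`), `η¹ = a₁e¹ + a₄e⁴` (`a₄ ≠ 0`), `η² = he²`,
`η³ = ke³` (`h, k > 0`) satisfy `dη⁰ = −2η²∧η³`,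
`d(η³∧η¹) = 3η⁰∧η¹∧η² + m e⁴∧η¹∧η²` and
`d(η¹∧η²) = −3η⁰∧η³∧η¹ − m e⁴∧η³∧η¹`, then `k = h`, `μ₁ = 2h²` and
`3a₁μ₄ = 6h²a₄ − a₄ − a₁m`. -/
theorem stmt_13 (m : ℤ) (μ₁ μ₄ a₁ a₄ h k : ℝ)
    (hμ₁ : μ₁ ≠ 0) (ha₄ : a₄ ≠ 0) (hh : 0 < h) (hk : 0 < k)
    (η0 η1 η2 η3 : One4)
    (hη0 : η0 = μ₁ • (Pi.single 0 1 : One4) + μ₄ • (Pi.single 3 1 : One4))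
    (hη1 : η1 = a₁ • (Pi.single 0 1 : One4) + a₄ • (Pi.single 3 1 : One4))
    (hη2 : η2 = h • (Pi.single 1 1 : One4))
    (hη3 : η3 = k • (Pi.single 2 1 : One4))
    (heq0 : dOne η0 = (-2 : ℝ) • wedge11 η2 η3)
    (heq31 : dTwo (wedge11 η3 η1)
      = (3 : ℝ) • wedge12 η0 (wedge11 η1 η2)
        + (m : ℝ) • wedge12 (Pi.single 3 1 : One4) (wedge11 η1 η2))
    (heq12 : dTwo (wedge11 η1 η2)
      = (-3 : ℝ) • wedge12 η0 (wedge11 η3 η1)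
        - (m : ℝ) • wedge12 (Pi.single 3 1 : One4) (wedge11 η3 η1)) :
    k = h ∧ μ₁ = 2 * h ^ 2 ∧ 3 * a₁ * μ₄ = 6 * h ^ 2 * a₄ - a₄ - a₁ * m :=
  stmt_13_general m μ₁ μ₄ a₁ a₄ h k ha₄ hh hk η0 η1 η2 η3 hη0 hη1 hη2 hη3 heq0 heq31 heq12
end
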